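/- Let n ≥ 2, let A^{(1)},…,A^{(m)} be real symmetric n×n matrices, and define f(Q) := Σ_{ℓ=1}^m Σ_{j=1}^n ((Qᵀ A^{(ℓ)} Q)_{jj})². Let ε > 0, let Q ∈ SO(n), let 1 ≤ i < j ≤ n satisfy |⟨ProjGrad f(Q), Q δ_{i,j}⟩| ≥ ε ‖ProjGrad f(Q)‖, let θ* ∈ [−π/4, π/4] be a global maximizer over ℝ of θ ↦ f(Q G(i,j,θ)), and set Q' := Q G(i,j,θ*). Then |f(Q') − f(Q)| ≥ (√2 ε / 4) · ‖ProjGrad f(Q)‖ · ‖Q' − Q‖. -/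

import Mathlib

open Matrix Real Filter Set

attribute [local instance] Matrix.frobeniusNormedAddCommGroup Matrix.frobeniusNormedSpace

noncomputable def frobInner {n : ℕ} (A B : Matrix (Fin n) (Fin n) ℝ) : ℝ :=
  ∑ i, ∑ j, A i j * B i j

noncomputable def frobNorm {n : ℕ} (A : Matrix (Fin n) (Fin n) ℝ) : ℝ :=
  Real.sqrt (∑ i, ∑ j, (A i j) ^ 2)

def SOn (n : ℕ) : Set (Matrix (Fin n) (Fin n) ℝ) := {Q | Qᵀ * Q = 1 ∧ Q.det = 1}

noncomputable def grad {n : ℕ} (f : Matrix (Fin n) (Fin n) ℝ → ℝ)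
    (Q : Matrix (Fin n) (Fin n) ℝ) : Matrix (Fin n) (Fin n) ℝ :=
  Matrix.of fun k l => fderiv ℝ f Q (Matrix.single k l 1)

noncomputable def Lam {n : ℕ} (f : Matrix (Fin n) (Fin n) ℝ → ℝ)
    (Q : Matrix (Fin n) (Fin n) ℝ) : Matrix (Fin n) (Fin n) ℝ :=
  (1 / 2 : ℝ) • (Qᵀ * grad f Q - (grad f Q)ᵀ * Q)

noncomputable def projGrad {n : ℕ} (f : Matrix (Fin n) (Fin n) ℝ → ℝ)
    (Q : Matrix (Fin n) (Fin n) ℝ) : Matrix (Fin n) (Fin n) ℝ := Q * Lam f Q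

noncomputable def givens {n : ℕ} (i j : Fin n) (θ : ℝ) : Matrix (Fin n) (Fin n) ℝ :=
  Matrix.of fun k l =>
    if k = i ∧ l = i then Real.cos θ
    else if k = j ∧ l = j then Real.cos θ
    else if k = j ∧ l = i then Real.sin θ
    else if k = i ∧ l = j then -Real.sin θ
    else if k = l then 1 else 0

def deltaMat {n : ℕ} (i j : Fin n) : Matrix (Fin n) (Fin n) ℝ :=
  Matrix.of fun k l => if k = j ∧ l = i then 1 else if k = i ∧ l = j then -1 else 0

/-! Along the Givens curve `θ ↦ Q * givens i j θ` the cost is a trigonometric polynomial of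
frequency four, `f Q + a * (cos (4θ) - 1) + b * sin (4θ)`, whose slope at `θ = 0` is
`⟨ProjGrad f Q, Q δ⟩ = 4b`. At a global maximizer `θ` the vector `(a, b)` is a nonnegative
multiple `u` of `(cos 4θ, sin 4θ)`, so the gain is `u (1 - cos 4θ)` while the slope is
`4u sin 4θ`. As `‖Q' - Q‖ = √8 |sin (θ/2)|`, the claim reduces to the elementary inequality
`4 |sin 4x| |sin (x/2)| ≤ 1 - cos 4x` on `[-π/4, π/4]`. -/

section Frobenius
variable {n : ℕ}

lemma frobInner_eq_trace (A B : Matrix (Fin n) (Fin n) ℝ) : frobInner A B = trace (Aᵀ * B) := by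
  simp only [frobInner, trace, diag, mul_apply, transpose_apply]
  exact Finset.sum_comm

lemma frobInner_mul_left {Q : Matrix (Fin n) (Fin n) ℝ} (hQ : Qᵀ * Q = 1)
    (A B : Matrix (Fin n) (Fin n) ℝ) : frobInner (Q * A) (Q * B) = frobInner A B := by
  rw [frobInner_eq_trace, frobInner_eq_trace, transpose_mul, Matrix.mul_assoc,
    ← Matrix.mul_assoc Qᵀ, hQ, Matrix.one_mul]

lemma frobNorm_eq_sqrt_frobInner (A : Matrix (Fin n) (Fin n) ℝ) :
    frobNorm A = √(frobInner A A) := by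
  simp only [frobNorm, frobInner, sq]

lemma frobNorm_mul_left {Q : Matrix (Fin n) (Fin n) ℝ} (hQ : Qᵀ * Q = 1)
    (A : Matrix (Fin n) (Fin n) ℝ) : frobNorm (Q * A) = frobNorm A := by
  rw [frobNorm_eq_sqrt_frobInner, frobNorm_eq_sqrt_frobInner, frobInner_mul_left hQ]

lemma frobInner_grad (f : Matrix (Fin n) (Fin n) ℝ → ℝ) (Q H : Matrix (Fin n) (Fin n) ℝ) :
    frobInner (grad f Q) H = fderiv ℝ f Q H := by
  conv_rhs => rw [matrix_eq_sum_single H]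
  simp only [map_sum, frobInner, grad, of_apply]
  refine Finset.sum_congr rfl fun k _ => Finset.sum_congr rfl fun l _ => ?_
  rw [show single k l (H k l) = H k l • single k l 1 by simp, map_smul, smul_eq_mul, mul_comm]

lemma frobInner_projGrad_mul {Q : Matrix (Fin n) (Fin n) ℝ} (hQ : Qᵀ * Q = 1)
    {S : Matrix (Fin n) (Fin n) ℝ} (hS : Sᵀ = -S) (f : Matrix (Fin n) (Fin n) ℝ → ℝ) :
    frobInner (projGrad f Q) (Q * S) = fderiv ℝ f Q (Q * S) := by
  set G := grad f Q
  have hskew : trace (Qᵀ * G * S) = -trace (Gᵀ * Q * S) := by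
    rw [← trace_transpose, transpose_mul, transpose_mul, hS, transpose_transpose, neg_mul,
      trace_neg, trace_mul_comm, Matrix.mul_assoc]
  have hLam : (Lam f Q)ᵀ = (1 / 2 : ℝ) • (Gᵀ * Q - Qᵀ * G) := by
    simp only [Lam, transpose_smul, transpose_sub, transpose_mul, transpose_transpose, G]
  calc frobInner (projGrad f Q) (Q * S) = trace ((Lam f Q)ᵀ * S) := by
        rw [projGrad, frobInner_mul_left hQ, frobInner_eq_trace]
    _ = trace (Gᵀ * Q * S) := by
        rw [hLam, smul_mul, trace_smul, sub_mul, trace_sub, hskew, smul_eq_mul]; ring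
    _ = fderiv ℝ f Q (Q * S) := by rw [← frobInner_grad, frobInner_eq_trace, Matrix.mul_assoc]

end Frobenius

section Givens
variable {n : ℕ} {i j : Fin n}

lemma givens_eq (hij : i ≠ j) (θ : ℝ) :
    givens i j θ = 1 + (cos θ - 1) • (single i i 1 + single j j 1) + sin θ • deltaMat i j := by
  ext k l
  simp only [givens, deltaMat, Matrix.single_apply, Matrix.one_apply, Matrix.add_apply,
    Matrix.smul_apply, of_apply, smul_eq_mul]
  by_cases h1 : k = i <;> by_cases h2 : k = j <;> by_cases h3 : l = i <;> by_cases h4 : l = j <;>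
    by_cases h5 : k = l <;> simp_all [eq_comm]

lemma givens_zero (hij : i ≠ j) : givens i j 0 = 1 := by
  simp [givens_eq hij]

lemma deltaMat_transpose (hij : i ≠ j) : (deltaMat i j)ᵀ = -deltaMat i j := by
  ext k l
  by_cases h1 : k = i <;> by_cases h2 : k = j <;> by_cases h3 : l = i <;> by_cases h4 : l = j <;>
    simp_all [deltaMat]

lemma transpose_givens_row_fst (hij : i ≠ j) (θ : ℝ) :
    (givens i j θ)ᵀ i = cos θ • Pi.single i 1 + sin θ • Pi.single j 1 := by
  ext a
  by_cases h1 : a = i <;> by_cases h2 : a = j <;> simp_all [givens, Pi.single_apply, eq_comm]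

lemma transpose_givens_row_snd (hij : i ≠ j) (θ : ℝ) :
    (givens i j θ)ᵀ j = (-sin θ) • Pi.single i 1 + cos θ • Pi.single j 1 := by
  ext a
  by_cases h1 : a = i <;> by_cases h2 : a = j <;> simp_all [givens, Pi.single_apply, eq_comm]

lemma transpose_givens_row_of_ne {t : Fin n} (hi : t ≠ i) (hj : t ≠ j) (θ : ℝ) :
    (givens i j θ)ᵀ t = Pi.single t 1 := by
  ext a
  by_cases h : a = t <;> simp_all [givens]

lemma hasDerivAt_mul_givens (hij : i ≠ j) (Q : Matrix (Fin n) (Fin n) ℝ) :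
    HasDerivAt (fun θ => Q * givens i j θ) (Q * deltaMat i j) 0 := by
  have h : (fun θ => Q * givens i j θ) = fun θ =>
      Q + (cos θ - 1) • (Q * (single i i 1 + single j j 1)) + sin θ • (Q * deltaMat i j) := by
    funext θ
    rw [givens_eq hij, Matrix.mul_add, Matrix.mul_add, Matrix.mul_one, Matrix.mul_smul,
      Matrix.mul_smul]
  rw [h]
  have hd := ((((hasDerivAt_cos 0).sub_const 1).smul_const
    (Q * (single i i 1 + single j j 1))).const_add Q).add
      ((hasDerivAt_sin 0).smul_const (Q * deltaMat i j))
  rw [sin_zero, cos_zero, neg_zero, zero_smul, one_smul, zero_add] at hd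
  exact hd

lemma hasDerivAt_comp_mul_givens {Q : Matrix (Fin n) (Fin n) ℝ} (hQ : Qᵀ * Q = 1) (hij : i ≠ j)
    {f : Matrix (Fin n) (Fin n) ℝ → ℝ} (hf : DifferentiableAt ℝ f Q) :
    HasDerivAt (fun θ => f (Q * givens i j θ))
      (frobInner (projGrad f Q) (Q * deltaMat i j)) 0 := by
  rw [frobInner_projGrad_mul hQ (deltaMat_transpose hij)]
  refine hf.hasFDerivAt.comp_hasDerivAt_of_eq 0 (hasDerivAt_mul_givens hij Q) ?_
  rw [givens_zero hij, Matrix.mul_one]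

lemma frobNorm_givens_sub_one (hij : i ≠ j) (θ : ℝ) :
    frobNorm (givens i j θ - 1) = √8 * |sin (θ / 2)| := by
  have hsq : ∑ k, ∑ l, ((givens i j θ - 1) k l) ^ 2 = 8 * sin (θ / 2) ^ 2 := by
    rw [Fintype.sum_eq_add i j hij fun k hk =>
        Finset.sum_eq_zero fun l _ => by
          rcases eq_or_ne k l with rfl | h <;> simp [givens, hk.1, hk.2, *],
      Fintype.sum_eq_add i j hij fun l hl => by simp [givens, hl.1, hl.2, Ne.symm hl.1],
      Fintype.sum_eq_add i j hij fun l hl => by simp [givens, hl.1, hl.2, Ne.symm hl.2]]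
    have hhalf := cos_two_mul (θ / 2)
    rw [show 2 * (θ / 2) = θ by ring] at hhalf
    simp [givens, hij, hij.symm]
    linear_combination 2 * sin_sq_add_cos_sq θ - 4 * hhalf - 8 * sin_sq_add_cos_sq (θ / 2)
  rw [frobNorm, hsq, sqrt_mul (by norm_num), sqrt_sq_eq_abs]

lemma frobNorm_mul_givens_sub {Q : Matrix (Fin n) (Fin n) ℝ} (hQ : Qᵀ * Q = 1) (hij : i ≠ j)
    (θ : ℝ) : frobNorm (Q * givens i j θ - Q) = √8 * |sin (θ / 2)| := by
  rw [← frobNorm_givens_sub_one hij, ← frobNorm_mul_left hQ (givens i j θ - 1), Matrix.mul_sub,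
    Matrix.mul_one]

end Givens

lemma transpose_mul_mul_apply_self {n : ℕ} (G B : Matrix (Fin n) (Fin n) ℝ) (t : Fin n) :
    (Gᵀ * B * G) t t = Gᵀ t ⬝ᵥ (B *ᵥ Gᵀ t) := by
  simp only [mul_apply, dotProduct, mulVec, transpose_apply, Finset.sum_mul, Finset.mul_sum]
  rw [Finset.sum_comm]
  simp only [mul_comm, mul_left_comm]

lemma cos_four_mul (x : ℝ) : cos (4 * x) = 1 - 8 * sin x ^ 2 * cos x ^ 2 := by
  rw [show 4 * x = 2 * (2 * x) by ring, cos_two_mul, cos_two_mul]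
  linear_combination 8 * cos x ^ 2 * sin_sq_add_cos_sq x

lemma sin_four_mul (x : ℝ) : sin (4 * x) = 4 * sin x * cos x * (cos x ^ 2 - sin x ^ 2) := by
  rw [show 4 * x = 2 * (2 * x) by ring, sin_two_mul, sin_two_mul, cos_two_mul]
  linear_combination 4 * sin x * cos x * sin_sq_add_cos_sq x

section DiagonalCost
variable {n : ℕ} {i j : Fin n} {B : Matrix (Fin n) (Fin n) ℝ}

lemma givens_conj_apply_fst (hij : i ≠ j) (hB : Bᵀ = B) (θ : ℝ) :
    ((givens i j θ)ᵀ * B * givens i j θ) i i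
      = cos θ ^ 2 * B i i + 2 * cos θ * sin θ * B i j + sin θ ^ 2 * B j j := by
  have hBji : B j i = B i j := by rw [← transpose_apply B i j, hB]
  rw [transpose_mul_mul_apply_self, transpose_givens_row_fst hij]
  simp [mulVec_add, mulVec_smul, add_dotProduct, smul_dotProduct, dotProduct_add, hBji]
  ring

lemma givens_conj_apply_snd (hij : i ≠ j) (hB : Bᵀ = B) (θ : ℝ) :
    ((givens i j θ)ᵀ * B * givens i j θ) j j
      = sin θ ^ 2 * B i i - 2 * cos θ * sin θ * B i j + cos θ ^ 2 * B j j := by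
  have hBji : B j i = B i j := by rw [← transpose_apply B i j, hB]
  rw [transpose_mul_mul_apply_self, transpose_givens_row_snd hij]
  simp [mulVec_add, mulVec_smul, add_dotProduct, smul_dotProduct, dotProduct_add, mulVec_neg,
    neg_dotProduct, hBji]
  ring

lemma givens_conj_apply_of_ne {t : Fin n} (hi : t ≠ i) (hj : t ≠ j) (θ : ℝ) :
    ((givens i j θ)ᵀ * B * givens i j θ) t t = B t t := by
  rw [transpose_mul_mul_apply_self, transpose_givens_row_of_ne hi hj]
  simp

lemma sum_diag_sq_givens_conj (hij : i ≠ j) (hB : Bᵀ = B) (θ : ℝ) :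
    ∑ t, ((givens i j θ)ᵀ * B * givens i j θ) t t ^ 2
      = ∑ t, B t t ^ 2 + (((B i i - B j j) / 2) ^ 2 - B i j ^ 2) * (cos (4 * θ) - 1)
        + (B i i - B j j) * B i j * sin (4 * θ) := by
  have hdiff := Fintype.sum_eq_add
    (f := fun t => ((givens i j θ)ᵀ * B * givens i j θ) t t ^ 2 - B t t ^ 2) i j hij
    fun t ht => by rw [givens_conj_apply_of_ne ht.1 ht.2, sub_self]
  rw [Finset.sum_sub_distrib, givens_conj_apply_fst hij hB, givens_conj_apply_snd hij hB] at hdiff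
  rw [cos_four_mul, sin_four_mul]
  linear_combination
    hdiff + (B i i ^ 2 + B j j ^ 2) * (1 + sin θ ^ 2 + cos θ ^ 2) * sin_sq_add_cos_sq θ

lemma exists_sum_diag_sq_mul_givens {m : ℕ} {A : Fin m → Matrix (Fin n) (Fin n) ℝ}
    (hA : ∀ ℓ, (A ℓ)ᵀ = A ℓ) (hij : i ≠ j) (Q : Matrix (Fin n) (Fin n) ℝ) :
    ∃ a b : ℝ, ∀ θ, ∑ ℓ, ∑ t, (((Q * givens i j θ)ᵀ * A ℓ * (Q * givens i j θ)) t t) ^ 2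
      = ∑ ℓ, ∑ t, ((Qᵀ * A ℓ * Q) t t) ^ 2 + a * (cos (4 * θ) - 1) + b * sin (4 * θ) := by
  set B := fun ℓ => Qᵀ * A ℓ * Q
  have hB : ∀ ℓ, (B ℓ)ᵀ = B ℓ := fun ℓ => by
    simp only [B, transpose_mul, transpose_transpose, hA, Matrix.mul_assoc]
  refine ⟨∑ ℓ, (((B ℓ i i - B ℓ j j) / 2) ^ 2 - B ℓ i j ^ 2),
    ∑ ℓ, (B ℓ i i - B ℓ j j) * B ℓ i j, fun θ => ?_⟩
  have hconj : ∀ ℓ, (Q * givens i j θ)ᵀ * A ℓ * (Q * givens i j θ)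
      = (givens i j θ)ᵀ * B ℓ * givens i j θ := fun ℓ => by
    simp only [B, transpose_mul, Matrix.mul_assoc]
  simp only [hconj, sum_diag_sq_givens_conj hij (hB _), Finset.sum_add_distrib, Finset.sum_mul]
  rfl

end DiagonalCost

lemma differentiable_sum_diag_sq {n m : ℕ} (A : Fin m → Matrix (Fin n) (Fin n) ℝ) :
    Differentiable ℝ fun M : Matrix (Fin n) (Fin n) ℝ => ∑ ℓ, ∑ t, ((Mᵀ * A ℓ * M) t t) ^ 2 := by
  simp only [mul_apply, transpose_apply]
  fun_prop

lemma hasDerivAt_const_add_cos_sin_four_mul (c a b : ℝ) :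
    HasDerivAt (fun θ => c + a * (cos (4 * θ) - 1) + b * sin (4 * θ)) (4 * b) 0 := by
  have h4 : HasDerivAt (fun θ : ℝ => 4 * θ) 4 0 := by
    simpa using (hasDerivAt_id (0 : ℝ)).const_mul 4
  exact (((((hasDerivAt_cos _).comp 0 h4).sub_const 1).const_mul a |>.const_add c).add
    (((hasDerivAt_sin _).comp 0 h4).const_mul b)).congr_deriv (by simp [mul_comm])

lemma exists_nonneg_eq_of_forall_le_cos_sin {a b x₀ : ℝ}
    (h : ∀ x, a * cos x + b * sin x ≤ a * cos x₀ + b * sin x₀) :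
    ∃ u, 0 ≤ u ∧ a = u * cos x₀ ∧ b = u * sin x₀ := by
  have hder : HasDerivAt (fun x => a * cos x + b * sin x) (a * -sin x₀ + b * cos x₀) x₀ :=
    ((hasDerivAt_cos x₀).const_mul a).add ((hasDerivAt_sin x₀).const_mul b)
  have hcrit : a * -sin x₀ + b * cos x₀ = 0 :=
    (IsMaxOn.isLocalMax (f := fun x => a * cos x + b * sin x) (s := univ) (fun x _ => h x)
      Filter.univ_mem).hasDerivAt_eq_zero hder
  have hnonneg : 0 ≤ a * cos x₀ + b * sin x₀ := by
    have := h (x₀ + π)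
    rw [cos_add_pi, sin_add_pi] at this
    linarith
  refine ⟨_, hnonneg, ?_, ?_⟩
  · linear_combination -sin x₀ * hcrit - a * sin_sq_add_cos_sq x₀
  · linear_combination cos x₀ * hcrit - b * sin_sq_add_cos_sq x₀

lemma four_mul_cos_two_mul_mul_sin_half_le {x : ℝ} (h0 : 0 ≤ x) (hx : x ≤ π / 4) :
    4 * cos (2 * x) * sin (x / 2) ≤ sin (2 * x) := by
  have hsin : sin x = 2 * sin (x / 2) * cos (x / 2) := by
    rw [← sin_two_mul, mul_div_cancel₀ x two_ne_zero]
  have hπ := pi_pos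
  have hcos : cos x ≤ cos (x / 2) :=
    cos_le_cos_of_nonneg_of_le_pi (by linarith) (by linarith) (by linarith)
  have hcx : 0 ≤ cos x := cos_nonneg_of_mem_Icc ⟨by linarith, by linarith⟩
  have hsh : 0 ≤ sin (x / 2) := sin_nonneg_of_nonneg_of_le_pi (by linarith) (by linarith)
  have hch : 0 ≤ cos (x / 2) := cos_nonneg_of_mem_Icc ⟨by linarith, by linarith⟩
  have hcos2 : cos (2 * x) ≤ cos x * cos (x / 2) := by
    rw [cos_two_mul]
    nlinarith [cos_le_one x, mul_le_mul_of_nonneg_left hcos hcx]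
  rw [sin_two_mul, hsin]
  nlinarith [mul_le_mul_of_nonneg_left hcos2 (mul_nonneg hsh hch)]

lemma abs_sin_four_mul_mul_abs_sin_half_le {x : ℝ} (hx : x ∈ Icc (-(π / 4)) (π / 4)) :
    4 * |sin (4 * x)| * |sin (x / 2)| ≤ 1 - cos (4 * x) := by
  wlog h0 : 0 ≤ x generalizing x
  · simpa [neg_div] using this (x := -x) ⟨by linarith [hx.2], by linarith [hx.1]⟩ (by linarith)
  have hπ := pi_pos
  have hs2 : 0 ≤ sin (2 * x) := sin_nonneg_of_nonneg_of_le_pi (by linarith) (by linarith [hx.2])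
  have hc2 : 0 ≤ cos (2 * x) := cos_nonneg_of_mem_Icc ⟨by linarith, by linarith [hx.2]⟩
  have hsh : 0 ≤ sin (x / 2) := sin_nonneg_of_nonneg_of_le_pi (by linarith) (by linarith [hx.2])
  have hsin4 : sin (4 * x) = 2 * sin (2 * x) * cos (2 * x) := by
    rw [← sin_two_mul, ← mul_assoc]; norm_num
  have hcos4 : 1 - cos (4 * x) = 2 * sin (2 * x) ^ 2 := by
    rw [show 4 * x = 2 * (2 * x) by ring, cos_two_mul, ← sin_sq_add_cos_sq (2 * x)]; ring
  rw [hsin4, hcos4, abs_of_nonneg (by positivity), abs_of_nonneg hsh]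
  nlinarith [mul_le_mul_of_nonneg_left (four_mul_cos_two_mul_mul_sin_half_le h0 hx.2) hs2]

theorem stmt_12_general {n m : ℕ} (A : Fin m → Matrix (Fin n) (Fin n) ℝ)
    (hA : ∀ ℓ, (A ℓ)ᵀ = A ℓ)
    (f : Matrix (Fin n) (Fin n) ℝ → ℝ)
    (hf : ∀ Q, f Q = ∑ ℓ : Fin m, ∑ j, ((Qᵀ * A ℓ * Q) j j) ^ 2)
    (ε : ℝ)
    (Q : Matrix (Fin n) (Fin n) ℝ) (hQ : Q ∈ SOn n) (i j : Fin n) (hij : i < j)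
    (hgrad : ε * frobNorm (projGrad f Q) ≤ |frobInner (projGrad f Q) (Q * deltaMat i j)|)
    (θ : ℝ) (hθ : θ ∈ Set.Icc (-(π / 4)) (π / 4))
    (hmax : ∀ θ' : ℝ, f (Q * givens i j θ') ≤ f (Q * givens i j θ))
    (Q' : Matrix (Fin n) (Fin n) ℝ) (hQ' : Q' = Q * givens i j θ) :
    Real.sqrt 2 * ε / 4 * frobNorm (projGrad f Q) * frobNorm (Q' - Q) ≤ |f Q' - f Q| := by
  obtain ⟨a, b, hcurve⟩ := exists_sum_diag_sq_mul_givens hA hij.ne Q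
  simp only [← hf] at hcurve
  have hderiv : frobInner (projGrad f Q) (Q * deltaMat i j) = 4 * b := by
    have hfQ : DifferentiableAt ℝ f Q := by
      rw [funext hf]; exact (differentiable_sum_diag_sq A).differentiableAt
    refine (hasDerivAt_comp_mul_givens hQ.1 hij.ne hfQ).unique ?_
    rw [funext hcurve]
    exact hasDerivAt_const_add_cos_sin_four_mul _ _ _
  obtain ⟨u, hu, rfl, rfl⟩ :=
      exists_nonneg_eq_of_forall_le_cos_sin (a := a) (b := b) (x₀ := 4 * θ) fun x => by
    have := hmax (x / 4)
    rw [hcurve, hcurve, mul_div_cancel₀ x four_ne_zero] at this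
    linarith
  have hgain : f Q' - f Q = u * (1 - cos (4 * θ)) := by
    rw [hQ', hcurve]; linear_combination u * sin_sq_add_cos_sq (4 * θ)
  have hslope : ε * frobNorm (projGrad f Q) ≤ 4 * u * |sin (4 * θ)| := by
    rwa [hderiv, abs_mul, abs_mul, abs_of_nonneg hu, abs_of_pos four_pos, ← mul_assoc] at hgrad
  have hsqrt : √2 * √8 = 4 := by
    rw [← sqrt_mul zero_le_two, show (2 : ℝ) * 8 = 4 ^ 2 by norm_num, sqrt_sq zero_le_four]
  rw [hQ', frobNorm_mul_givens_sub hQ.1 hij.ne, ← hQ', hgain,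
    abs_of_nonneg (mul_nonneg hu (sub_nonneg.2 (cos_le_one _)))]
  calc √2 * ε / 4 * frobNorm (projGrad f Q) * (√8 * |sin (θ / 2)|)
      = ε * frobNorm (projGrad f Q) * |sin (θ / 2)| := by
        linear_combination ε * frobNorm (projGrad f Q) * |sin (θ / 2)| / 4 * hsqrt
    _ ≤ 4 * u * |sin (4 * θ)| * |sin (θ / 2)| := by gcongr
    _ = u * (4 * |sin (4 * θ)| * |sin (θ / 2)|) := by ring
    _ ≤ u * (1 - cos (4 * θ)) := by gcongr; exact abs_sin_four_mul_mul_abs_sin_half_le hθ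

theorem stmt_12 {n m : ℕ} (hn : 2 ≤ n) (A : Fin m → Matrix (Fin n) (Fin n) ℝ)
    (hA : ∀ ℓ, (A ℓ)ᵀ = A ℓ)
    (f : Matrix (Fin n) (Fin n) ℝ → ℝ)
    (hf : ∀ Q, f Q = ∑ ℓ : Fin m, ∑ j, ((Qᵀ * A ℓ * Q) j j) ^ 2)
    (ε : ℝ) (hε : 0 < ε)
    (Q : Matrix (Fin n) (Fin n) ℝ) (hQ : Q ∈ SOn n) (i j : Fin n) (hij : i < j)
    (hgrad : ε * frobNorm (projGrad f Q) ≤ |frobInner (projGrad f Q) (Q * deltaMat i j)|)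
    (θ : ℝ) (hθ : θ ∈ Set.Icc (-(π / 4)) (π / 4))
    (hmax : ∀ θ' : ℝ, f (Q * givens i j θ') ≤ f (Q * givens i j θ))
    (Q' : Matrix (Fin n) (Fin n) ℝ) (hQ' : Q' = Q * givens i j θ) :
    Real.sqrt 2 * ε / 4 * frobNorm (projGrad f Q) * frobNorm (Q' - Q) ≤ |f Q' - f Q| :=
  stmt_12_general A hA f hf ε Q hQ i j hij hgrad θ hθ hmax Q' hQ'
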